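/- Let R be a domain, I an ideal of R, and f ∈ I a nonzero element. Then R = Γ(R,I) if and only if Rf = (Rf : I^∞). -/

import Mathlib

noncomputable section

def locAt (R K : Type) [CommRing R] [Field K] [Algebra R K] (r : R) : Subring K :=
  (Algebra.adjoin R {(algebraMap R K r)⁻¹}).toSubring

def Gamma (R K : Type) [CommRing R] [Field K] [Algebra R K] (I : Ideal R) : Set K :=
  ⋂ (r : R) (_ : r ∈ I) (_ : r ≠ 0), (locAt R K r : Set K)

def satur (R : Type) [CommRing R] (I : Ideal R) (f : R) : Set R :=
  {r : R | ∀ g ∈ I, ∃ n : ℕ, r * g ^ n ∈ Ideal.span {f}}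

/-! An element `x ∈ K` lies in `Γ(R,I)` iff `x gⁿ ∈ R` for every nonzero `g ∈ I`. Hence
`r ∈ (Rf : I^∞)` gives `r / f ∈ Γ(R,I)`, and `Γ(R,I) = R` forces `f ∣ r`. Conversely, if
`x ∈ Γ(R,I)` and `x fⁿ⁺¹ = a ∈ R`, then `a gᵐ = (x gᵐ) fⁿ⁺¹ ∈ Rf` for all `g ∈ I`, so saturation
gives `a = c f` and `x fⁿ = c`; descending on `n` puts `x` in `R`. -/

section

variable {R K : Type} [CommRing R] [Field K] [Algebra R K]

theorem mem_locAt_iff {g : R} (hg : algebraMap R K g ≠ 0) {x : K} :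
    x ∈ locAt R K g ↔ ∃ (n : ℕ) (a : R), x * algebraMap R K g ^ n = algebraMap R K a := by
  change x ∈ Algebra.adjoin R _ ↔ _
  constructor
  · intro hx
    induction hx using Algebra.adjoin_induction with
    | mem y hy =>
      rw [Set.mem_singleton_iff.1 hy]
      exact ⟨1, 1, by simp [inv_mul_cancel₀ hg]⟩
    | algebraMap a => exact ⟨0, a, by simp⟩
    | add y z _ _ hy hz =>
      obtain ⟨n, a, ha⟩ := hy
      obtain ⟨m, b, hb⟩ := hz
      refine ⟨n + m, a * g ^ m + b * g ^ n, ?_⟩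
      simp only [map_add, map_mul, map_pow, pow_add]
      linear_combination algebraMap R K g ^ m * ha + algebraMap R K g ^ n * hb
    | mul y z _ _ hy hz =>
      obtain ⟨n, a, ha⟩ := hy
      obtain ⟨m, b, hb⟩ := hz
      refine ⟨n + m, a * b, ?_⟩
      rw [map_mul, ← ha, ← hb, pow_add]
      ring
  · rintro ⟨n, a, ha⟩
    have hx : x = algebraMap R K a * (algebraMap R K g)⁻¹ ^ n := by
      rw [inv_pow, ← ha, mul_inv_cancel_right₀ (pow_ne_zero n hg)]
    rw [hx]
    exact Subalgebra.mul_mem _ (Subalgebra.algebraMap_mem _ a)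
      (Subalgebra.pow_mem _ (Algebra.subset_adjoin (Set.mem_singleton _)) n)

theorem mem_Gamma_iff (hinj : Function.Injective (algebraMap R K)) {I : Ideal R} {x : K} :
    x ∈ Gamma R K I ↔
      ∀ g ∈ I, g ≠ 0 → ∃ (n : ℕ) (a : R), x * algebraMap R K g ^ n = algebraMap R K a := by
  simp only [Gamma, Set.mem_iInter, SetLike.mem_coe]
  refine forall₂_congr fun g _ => forall_congr' fun hg => mem_locAt_iff ?_
  exact (map_ne_zero_iff _ hinj).2 hg

theorem range_algebraMap_subset_Gamma (I : Ideal R) :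
    Set.range (algebraMap R K) ⊆ Gamma R K I := by
  rintro _ ⟨a, rfl⟩
  simp only [Gamma, Set.mem_iInter]
  exact fun g _ _ => Subalgebra.algebraMap_mem _ a

theorem span_singleton_subset_satur (I : Ideal R) (f : R) :
    (Ideal.span {f} : Set R) ⊆ satur R I f :=
  fun r hr _ _ => ⟨0, by simpa using hr⟩

theorem div_mem_Gamma_of_mem_satur (hinj : Function.Injective (algebraMap R K)) {I : Ideal R}
    {f r : R} (hf : f ≠ 0) (hr : r ∈ satur R I f) :
    algebraMap R K r / algebraMap R K f ∈ Gamma R K I := by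
  have hf' : algebraMap R K f ≠ 0 := (map_ne_zero_iff _ hinj).2 hf
  refine (mem_Gamma_iff hinj).2 fun g hgI _ => ?_
  obtain ⟨n, hn⟩ := hr g hgI
  obtain ⟨c, hc⟩ := Ideal.mem_span_singleton'.1 hn
  refine ⟨n, c, ?_⟩
  rw [div_mul_eq_mul_div, div_eq_iff hf', ← map_pow, ← map_mul, ← hc, map_mul]

theorem mem_satur_of_mul_pow_succ_eq (hinj : Function.Injective (algebraMap R K)) {I : Ideal R}
    {f a : R} {x : K} {n : ℕ} (hx : x ∈ Gamma R K I)
    (ha : x * algebraMap R K f ^ (n + 1) = algebraMap R K a) : a ∈ satur R I f := by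
  intro g hgI
  rcases eq_or_ne g 0 with rfl | hg
  · exact ⟨1, by simp⟩
  obtain ⟨m, b, hb⟩ := (mem_Gamma_iff hinj).1 hx g hgI hg
  refine ⟨m, Ideal.mem_span_singleton'.2 ⟨b * f ^ n, hinj ?_⟩⟩
  simp only [map_mul, map_pow, ← ha, ← hb]
  ring

theorem mem_range_of_mem_Gamma (hinj : Function.Injective (algebraMap R K)) {I : Ideal R}
    {f : R} (hsat : satur R I f ⊆ Ideal.span {f}) (hfI : f ∈ I) (hf : f ≠ 0) {x : K}
    (hx : x ∈ Gamma R K I) : x ∈ Set.range (algebraMap R K) := by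
  have hf' : algebraMap R K f ≠ 0 := (map_ne_zero_iff _ hinj).2 hf
  obtain ⟨n, a, ha⟩ := (mem_Gamma_iff hinj).1 hx f hfI hf
  induction n generalizing a with
  | zero => exact ⟨a, by simpa using ha.symm⟩
  | succ n ih =>
    obtain ⟨c, rfl⟩ := Ideal.mem_span_singleton'.1 (hsat (mem_satur_of_mul_pow_succ_eq hinj hx ha))
    refine ih c (mul_right_cancel₀ hf' ?_)
    rw [mul_assoc, ← pow_succ, ha, map_mul]

end

theorem gamma_eq_self_iff_saturated_general (R K : Type) [CommRing R] [Field K] [Algebra R K]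
    [IsFractionRing R K] (I : Ideal R) (f : R) (hfI : f ∈ I) (hf : f ≠ 0) :
    Gamma R K I = Set.range (algebraMap R K) ↔ (Ideal.span {f} : Set R) = satur R I f := by
  have hinj := IsFractionRing.injective R K
  refine ⟨fun hG => ?_, fun hS => ?_⟩
  · refine (span_singleton_subset_satur I f).antisymm fun r hr => ?_
    obtain ⟨s, hs⟩ : algebraMap R K r / algebraMap R K f ∈ Set.range (algebraMap R K) :=
      hG ▸ div_mem_Gamma_of_mem_satur hinj hf hr
    refine Ideal.mem_span_singleton'.2 ⟨s, hinj ?_⟩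
    rw [map_mul, hs, div_mul_cancel₀ _ ((map_ne_zero_iff _ hinj).2 hf)]
  · exact Set.Subset.antisymm (fun x hx => mem_range_of_mem_Gamma hinj hS.ge hfI hf hx)
      (range_algebraMap_subset_Gamma I)

/-- For a nonzero `f ∈ I`: `R = Γ(R,I)` if and only if `Rf = (Rf : I^∞)`. -/
theorem gamma_eq_self_iff_saturated (R K : Type) [CommRing R] [IsDomain R] [Field K] [Algebra R K]
    [IsFractionRing R K] (I : Ideal R) (f : R) (hfI : f ∈ I) (hf : f ≠ 0) :
    Gamma R K I = Set.range (algebraMap R K) ↔ (Ideal.span {f} : Set R) = satur R I f :=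
  gamma_eq_self_iff_saturated_general R K I f hfI hf
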